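/- The number of indecomposable permutations with exactly k inversions avoiding 321 equals the number of parallelogram polyominoes with k cells. -/

import Mathlib

def inversions {n : ℕ} (π : Equiv.Perm (Fin n)) : ℕ :=
  (Finset.univ.filter fun p : Fin n × Fin n => p.1 < p.2 ∧ π p.2 < π p.1).card

def Decomposable {n : ℕ} (π : Equiv.Perm (Fin n)) : Prop :=
  ∃ j : ℕ, 0 < j ∧ j < n ∧ ∀ i : Fin n, (i : ℕ) < j → (π i : ℕ) < j

def Indecomposable {n : ℕ} (π : Equiv.Perm (Fin n)) : Prop :=
  0 < n ∧ ¬ Decomposable π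

def invTable {n : ℕ} (π : Equiv.Perm (Fin n)) (i : Fin n) : ℕ :=
  (Finset.univ.filter fun j : Fin n => i < j ∧ π j < π i).card

def Avoids123 {n : ℕ} (π : Equiv.Perm (Fin n)) : Prop :=
  ¬ ∃ i j k : Fin n, i < j ∧ j < k ∧ π i < π j ∧ π j < π k

def Avoids132 {n : ℕ} (π : Equiv.Perm (Fin n)) : Prop :=
  ¬ ∃ i j k : Fin n, i < j ∧ j < k ∧ π i < π k ∧ π k < π j

def Avoids213 {n : ℕ} (π : Equiv.Perm (Fin n)) : Prop :=
  ¬ ∃ i j k : Fin n, i < j ∧ j < k ∧ π j < π i ∧ π i < π k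

def Avoids231 {n : ℕ} (π : Equiv.Perm (Fin n)) : Prop :=
  ¬ ∃ i j k : Fin n, i < j ∧ j < k ∧ π k < π i ∧ π i < π j

def Avoids312 {n : ℕ} (π : Equiv.Perm (Fin n)) : Prop :=
  ¬ ∃ i j k : Fin n, i < j ∧ j < k ∧ π j < π k ∧ π k < π i

def Avoids321 {n : ℕ} (π : Equiv.Perm (Fin n)) : Prop :=
  ¬ ∃ i j k : Fin n, i < j ∧ j < k ∧ π k < π j ∧ π j < π i

def LTRMax {n : ℕ} (π : Equiv.Perm (Fin n)) (k : Fin n) : Prop :=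
  ∀ i : Fin n, i < k → π i < π k

def revComp {n : ℕ} (π : Equiv.Perm (Fin n)) : Equiv.Perm (Fin n) :=
  Fin.revPerm * π * Fin.revPerm

/-- A parallelogram polyomino given by its pair of boundary sequences: two weakly
increasing nonnegative sequences `ℓ`, `r` of equal length with `ℓ₁ = 0`,
`ℓᵢ < rᵢ` and `ℓᵢ₊₁ < rᵢ`; its number of cells is `Σ (rᵢ - ℓᵢ)`. -/
def IsPPolyomino (k : ℕ) (l r : List ℕ) : Prop :=
  l.length = r.length ∧
  l.Pairwise (· ≤ ·) ∧ r.Pairwise (· ≤ ·) ∧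
  (l ≠ [] → l.headI = 0) ∧
  (∀ i, i < l.length → l.getD i 0 < r.getD i 0) ∧
  (∀ i, i + 1 < l.length → l.getD (i + 1) 0 < r.getD i 0) ∧
  (∑ i ∈ Finset.range l.length, (r.getD i 0 - l.getD i 0)) = k

/-!
Let `π` be a 321-avoiding permutation. Comparing the entries smaller than `π x` with the positions
left of `x` shows that an entry `x` with `x ≤ π x` is a left-to-right maximum and an entry with
`π x ≤ x` is a right-to-left minimum. Hence `x` is inverted with exactly `π x - x` later entries
(truncated subtraction), the values at the excedances `e₀ < ⋯ < e_{s-1}` (the positions with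
`e < π e`) increase, and `π` is
determined by the pairs `(e_j, π e_j)`: off the excedances it fills the remaining values in
increasing order.

The bijection sends `π` to the polyomino with rows `ℓ_j = e_j - j` and `r_j = π e_j - j`. Its
number of cells is `∑ (π e_j - e_j)`, the number of inversions, and indecomposability becomes
`ℓ₀ = 0` and `ℓ_{j+1} < r_j`. Conversely a polyomino gives the permutation sending the points
`ℓ_j + j` to `r_j + j` and the remaining positions, in order, to the remaining values. The
permutation of size `1` corresponds to the empty polyomino.
-/

open Finset

theorem val_le_val_of_strictMono {k n : ℕ} {f : Fin k → Fin n} (hf : StrictMono f) (j : Fin k) :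
    (j : ℕ) ≤ f j := by
  simpa using card_le_card_of_injOn f (s := Iio j) (t := Iio (f j))
    (fun i hi => by simpa using hf (by simpa using hi)) hf.injective.injOn

theorem val_sub_val_le_of_strictMono {m n : ℕ} {f : Fin m → Fin n} (hf : StrictMono f)
    (i j : Fin m) :
    (j : ℕ) - i ≤ f j - f i := by
  simpa using card_le_card_of_injOn f (s := Ico i j) (t := Ico (f i) (f j))
    (fun x hx => by simp only [coe_Ico, Set.mem_Ico] at hx ⊢; exact ⟨hf.monotone hx.1, hf hx.2⟩)
    hf.injective.injOn

theorem lt_card_filter_range_iff {L t : ℕ} {p : ℕ → Prop} [DecidablePred p]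
    (hp : ∀ i j, i ≤ j → j < L → p j → p i) (ht : t < L) : t < #{i ∈ range L | p i} ↔ p t := by
  constructor
  · intro h
    by_contra hpt
    have : {i ∈ range L | p i} ⊆ range t := fun i hi => by
      simp only [mem_filter, mem_range] at hi ⊢
      by_contra! hti
      exact hpt (hp t i hti hi.1 hi.2)
    have := card_le_card this
    simp only [card_range] at this
    omega
  · intro hpt
    have : range (t + 1) ⊆ {i ∈ range L | p i} := fun i hi => by
      simp only [mem_filter, mem_range] at hi ⊢
      exact ⟨by omega, hp i t (by omega) ht hpt⟩
    simpa using card_le_card this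

theorem card_filter_range_eq {L c : ℕ} {p : ℕ → Prop} [DecidablePred p] (hc : c ≤ L)
    (hp : ∀ t < L, p t ↔ t < c) : #{i ∈ range L | p i} = c := by
  have : {i ∈ range L | p i} = range c := by
    ext t
    simp only [mem_filter, mem_range]
    exact ⟨fun h => (hp t h.1).1 h.2, fun h => ⟨by omega, (hp t (by omega)).2 h⟩⟩
  rw [this, card_range]

theorem List.Pairwise.getD_le_getD {α : Type*} [Preorder α] {a : List α}
    (ha : a.Pairwise (· ≤ ·)) (d : α) {i j : ℕ} (hij : i ≤ j) (hj : j < a.length) :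
    a.getD i d ≤ a.getD j d := by
  rcases hij.eq_or_lt with rfl | hij
  · rfl
  rw [List.getD_eq_getElem _ _ (hij.trans hj), List.getD_eq_getElem _ _ hj]
  exact List.pairwise_iff_getElem.1 ha i j _ _ hij

theorem List.ext_getD {α : Type*} {a b : List α} (d : α) (hlen : a.length = b.length)
    (h : ∀ i < a.length, a.getD i d = b.getD i d) : a = b :=
  List.ext_getElem hlen fun i h₁ h₂ => by
    rw [← List.getD_eq_getElem _ d h₁, ← List.getD_eq_getElem _ d h₂, h i h₁]

section Permutations

variable {n : ℕ} {π : Equiv.Perm (Fin n)}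

theorem card_filter_apply_lt (π : Equiv.Perm (Fin n)) (y : Fin n) :
    #{b | π b < y} = y := by
  rw [← Fin.card_Iio y]
  exact card_equiv π (by simp)

theorem invTable_add_val (π : Equiv.Perm (Fin n)) (x : Fin n) :
    invTable π x + x = #{b | b < x ∧ π x < π b} + π x := by
  have hx : #{b | b < x} = x := by rw [← Fin.card_Iio x]; exact card_equiv (Equiv.refl _) (by simp)
  rw [← hx, ← card_filter_apply_lt π (π x), invTable]
  simp only [card_filter, ← sum_add_distrib]
  refine sum_congr rfl fun b _ => ?_
  have := π.injective.eq_iff (a := b) (b := x)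
  split_ifs <;> omega

theorem Avoids321.ltrMax_of_le_apply (hπ : Avoids321 π) {x : Fin n} (hx : x ≤ π x) :
    LTRMax π x := by
  intro w hwx
  by_contra! hle
  have hw : π x < π w := lt_of_le_of_ne hle (π.injective.ne (ne_of_gt hwx))
  have hpos : 0 < #{b | b < x ∧ π x < π b} := card_pos.2 ⟨w, by simp [hwx, hw]⟩
  obtain ⟨z, hz⟩ : (univ.filter fun z => x < z ∧ π z < π x).Nonempty := by
    rw [← card_pos, ← invTable]
    have := invTable_add_val π x
    omega
  simp only [mem_filter, mem_univ, true_and] at hz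
  exact hπ ⟨w, x, z, hwx, hz.1, hz.2, hw⟩

theorem Avoids321.apply_lt_apply_of_apply_le (hπ : Avoids321 π) {y z : Fin n} (hy : π y ≤ y)
    (hyz : y < z) : π y < π z := by
  by_contra! hle
  have hz : π z < π y := lt_of_le_of_ne hle (π.injective.ne (ne_of_gt hyz))
  have hpos : 0 < invTable π y := card_pos.2 ⟨z, by simp [hyz, hz]⟩
  obtain ⟨w, hw⟩ : (univ.filter fun w => w < y ∧ π y < π w).Nonempty := by
    rw [← card_pos]
    have := invTable_add_val π y
    omega
  simp only [mem_filter, mem_univ, true_and] at hw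
  exact hπ ⟨w, y, z, hw.1, hyz, hz, hw.2⟩

theorem Avoids321.invTable_eq (hπ : Avoids321 π) (x : Fin n) :
    invTable π x = π x - x := by
  rcases le_or_gt x (π x) with hx | hx
  · have hC : #{b | b < x ∧ π x < π b} = 0 := by
      simp only [card_eq_zero, filter_eq_empty_iff, not_and, not_lt, mem_univ, true_implies]
      exact fun b hb => (hπ.ltrMax_of_le_apply hx b hb).le
    have := invTable_add_val π x
    omega
  · have : invTable π x = 0 := by
      simp only [invTable, card_eq_zero, filter_eq_empty_iff, not_and, not_lt, mem_univ,
        true_implies]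
      exact fun b hb => (hπ.apply_lt_apply_of_apply_le hx.le hb).le
    omega

theorem inversions_eq_sum_invTable (π : Equiv.Perm (Fin n)) :
    inversions π = ∑ x, invTable π x := by
  simp only [inversions, invTable, card_filter, Fintype.sum_prod_type]

theorem Avoids321.inversions_eq_sum (hπ : Avoids321 π) :
    inversions π = ∑ x, ((π x : ℕ) - x) := by
  simp only [inversions_eq_sum_invTable, hπ.invTable_eq]

theorem Avoids321.apply_le_apply_of_eqOn_Iio (hπ : Avoids321 π) {σ : Equiv.Perm (Fin n)}
    {x : Fin n} (hx : π x ≤ x) (h : ∀ y < x, σ y = π y) : π x ≤ σ x := by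
  obtain ⟨z, hz⟩ := π.surjective (σ x)
  rcases lt_trichotomy z x with hzx | rfl | hxz
  · exact absurd (σ.injective (by rw [h z hzx, hz])) hzx.ne
  · exact hz.le
  · exact hz ▸ (hπ.apply_lt_apply_of_apply_le hx hxz).le

/-- At a common non-excedance `x`, both permutations take the least value not used left of `x`,
since all later values are larger. -/
theorem Avoids321.eq_of_apply_eq (hπ : Avoids321 π) {σ : Equiv.Perm (Fin n)} (hσ : Avoids321 σ)
    (h : ∀ x, x < π x ∨ x < σ x → π x = σ x) : π = σ := by
  ext x : 1
  induction x using WellFoundedLT.induction with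
  | _ x ih =>
    by_cases hx : x < π x ∨ x < σ x
    · exact h x hx
    simp only [not_or, not_lt] at hx
    exact le_antisymm (hπ.apply_le_apply_of_eqOn_Iio hx.1 fun y hy => (ih y hy).symm)
      (hσ.apply_le_apply_of_eqOn_Iio hx.2 ih)

theorem Indecomposable.lt_apply_of_val_eq_zero (hI : Indecomposable π) (hn : 1 < n) {x : Fin n}
    (hx : (x : ℕ) = 0) : x < π x := by
  by_contra! h
  exact hI.2 ⟨1, one_pos, hn, fun i hi => by
    rw [show i = x by omega]; omega⟩

theorem Indecomposable.symm_apply_lt (hI : Indecomposable π) (hn : 1 < n) {y : Fin n}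
    (hy : (y : ℕ) + 1 = n) : π.symm y < y := by
  refine lt_of_le_of_ne (by omega) fun h => hI.2 ⟨n - 1, by omega, by omega, fun i hi => ?_⟩
  have : π i ≠ y := fun h' => by rw [← π.symm_apply_eq.2 h'.symm, h] at hi; omega
  omega

theorem Indecomposable.exists_excedance_between (hI : Indecomposable π) (hπ : Avoids321 π)
    {x y : Fin n} (hx : x < π x) (hy : y < π y) (hxy : x < y) :
    ∃ z, x < z ∧ z ≤ π x ∧ z < π z := by
  by_contra! h
  have hπxy := hπ.ltrMax_of_le_apply hy.le x hxy
  -- otherwise `[0, π x]` is a block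
  refine hI.2 ⟨π x + 1, by omega, by omega, fun i hi => ?_⟩
  rcases le_or_gt (π i) i with hi' | hi'
  · omega
  rcases lt_trichotomy i x with hix | rfl | hix
  · have := hπ.ltrMax_of_le_apply hx.le i hix
    omega
  · omega
  · exact absurd (h i hix (by omega)) (not_le.2 hi')

end Permutations

structure IsParallelogram (l r : List ℕ) : Prop where
  length_eq : l.length = r.length
  sorted_fst : l.Pairwise (· ≤ ·)
  sorted_snd : r.Pairwise (· ≤ ·)
  getD_zero : 0 < l.length → l.getD 0 0 = 0
  lt : ∀ i, i < l.length → l.getD i 0 < r.getD i 0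
  step : ∀ i, i + 1 < l.length → l.getD (i + 1) 0 < r.getD i 0

def cells (l r : List ℕ) : ℕ := ∑ i ∈ range l.length, (r.getD i 0 - l.getD i 0)

/-- `r_{s-1} + s`, the size of the corresponding permutation; the empty polyomino corresponds to the
permutation of `Fin 1`. -/
def size (r : List ℕ) : ℕ := max 1 (r.getD (r.length - 1) 0 + r.length)

theorem isPPolyomino_iff {k : ℕ} {l r : List ℕ} :
    IsPPolyomino k l r ↔ IsParallelogram l r ∧ cells l r = k := by
  have head : (l ≠ [] → l.headI = 0) ↔ (0 < l.length → l.getD 0 0 = 0) := by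
    cases l <;> simp
  rw [IsPPolyomino, head]
  exact ⟨fun ⟨h₁, h₂, h₃, h₄, h₅, h₆, h₇⟩ => ⟨⟨h₁, h₂, h₃, h₄, h₅, h₆⟩, h₇⟩,
    fun ⟨⟨h₁, h₂, h₃, h₄, h₅, h₆⟩, h₇⟩ => ⟨h₁, h₂, h₃, h₄, h₅, h₆, h₇⟩⟩

section Excedances

variable {n : ℕ} {π : Equiv.Perm (Fin n)}

variable (π) in
def excedances : Finset (Fin n) := {x | x < π x}

variable (π) in
def excedanceEmb : Fin #(excedances π) ↪o Fin n := (excedances π).orderEmbOfFin rfl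

theorem lt_apply_excedanceEmb (j : Fin #(excedances π)) :
    excedanceEmb π j < π (excedanceEmb π j) := by
  simpa [excedances, excedanceEmb] using (excedances π).orderEmbOfFin_mem rfl j

theorem exists_excedanceEmb_eq {x : Fin n} (hx : x < π x) : ∃ j, excedanceEmb π j = x := by
  rw [← Set.mem_range, excedanceEmb, Finset.range_orderEmbOfFin]
  simpa [excedances] using hx

theorem Avoids321.strictMono_apply_excedanceEmb (hπ : Avoids321 π) :
    StrictMono fun j => π (excedanceEmb π j) := fun _ j hij =>
  hπ.ltrMax_of_le_apply (lt_apply_excedanceEmb j).le _ ((excedanceEmb π).strictMono hij)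

variable (π) in
def toPolyomino : List ℕ × List ℕ :=
  (List.ofFn fun j => (excedanceEmb π j : ℕ) - j, List.ofFn fun j => (π (excedanceEmb π j) : ℕ) - j)

@[simp]
theorem length_toPolyomino_fst : (toPolyomino π).1.length = #(excedances π) := by
  simp [toPolyomino]

@[simp]
theorem length_toPolyomino_snd : (toPolyomino π).2.length = #(excedances π) := by
  simp [toPolyomino]

theorem getD_toPolyomino_fst {j : ℕ} (hj : j < #(excedances π)) :
    (toPolyomino π).1.getD j 0 + j = excedanceEmb π ⟨j, hj⟩ := by
  have : j ≤ (excedanceEmb π ⟨j, hj⟩ : ℕ) :=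
    val_le_val_of_strictMono (excedanceEmb π).strictMono ⟨j, hj⟩
  simp only [toPolyomino, List.getD_eq_getElem?_getD, List.length_ofFn, hj, getElem?_pos,
    List.getElem_ofFn, Option.getD_some]
  omega

theorem getD_toPolyomino_snd {j : ℕ} (hj : j < #(excedances π)) :
    (toPolyomino π).2.getD j 0 + j = π (excedanceEmb π ⟨j, hj⟩) := by
  have : j ≤ (π (excedanceEmb π ⟨j, hj⟩) : ℕ) :=
    (val_le_val_of_strictMono (excedanceEmb π).strictMono ⟨j, hj⟩).trans
      (lt_apply_excedanceEmb ⟨j, hj⟩).le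
  simp only [toPolyomino, List.getD_eq_getElem?_getD, List.length_ofFn, hj, getElem?_pos,
    List.getElem_ofFn, Option.getD_some]
  omega

theorem Indecomposable.card_excedances_pos (hI : Indecomposable π) (hn : 1 < n) :
    0 < #(excedances π) :=
  card_pos.2 ⟨⟨0, by omega⟩, by simpa [excedances] using hI.lt_apply_of_val_eq_zero hn rfl⟩

theorem Indecomposable.val_excedanceEmb_zero (hI : Indecomposable π) (hs : 0 < #(excedances π)) :
    (excedanceEmb π ⟨0, hs⟩ : ℕ) = 0 := by
  have hn : 1 < n := by
    have := lt_apply_excedanceEmb (π := π) ⟨0, hs⟩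
    omega
  have h₀ : (⟨0, by omega⟩ : Fin n) ∈ excedances π := by
    simpa [excedances] using hI.lt_apply_of_val_eq_zero hn rfl
  rw [excedanceEmb, orderEmbOfFin_zero rfl hs]
  exact Nat.le_zero.1 ((excedances π).min'_le _ h₀)

theorem Indecomposable.excedanceEmb_succ_le (hI : Indecomposable π) (hπ : Avoids321 π) {i : ℕ}
    (hi : i + 1 < #(excedances π)) :
    excedanceEmb π ⟨i + 1, hi⟩ ≤ π (excedanceEmb π ⟨i, by omega⟩) := by
  by_contra! h
  have hlt : (⟨i, by omega⟩ : Fin #(excedances π)) < ⟨i + 1, hi⟩ := Fin.mk_lt_mk.2 i.lt_succ_self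
  obtain ⟨z, hz₁, hz₂, hz⟩ := hI.exists_excedance_between hπ (lt_apply_excedanceEmb _)
    (lt_apply_excedanceEmb _) ((excedanceEmb π).strictMono hlt)
  obtain ⟨t, rfl⟩ := exists_excedanceEmb_eq hz
  have h₁ := (excedanceEmb π).lt_iff_lt.1 hz₁
  have h₂ := (excedanceEmb π).lt_iff_lt.1 (hz₂.trans_lt h)
  simp only [Fin.lt_def] at h₁ h₂
  omega

theorem Indecomposable.apply_excedanceEmb_last (hI : Indecomposable π) (hπ : Avoids321 π)
    (hs : 0 < #(excedances π)) :
    (π (excedanceEmb π ⟨#(excedances π) - 1, by omega⟩) : ℕ) = n - 1 := by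
  have hn : 1 < n := by
    have := lt_apply_excedanceEmb (π := π) ⟨0, hs⟩
    omega
  have hz := hI.symm_apply_lt hn (y := ⟨n - 1, by omega⟩) (by simp only; omega)
  obtain ⟨t, ht⟩ := exists_excedanceEmb_eq (π := π) (x := π.symm ⟨n - 1, by omega⟩)
    (by rwa [Equiv.apply_symm_apply])
  have := hπ.strictMono_apply_excedanceEmb.monotone
    (show t ≤ ⟨#(excedances π) - 1, by omega⟩ from Nat.le_sub_one_of_lt t.2)
  simp only [ht, Equiv.apply_symm_apply, Fin.le_def] at this
  omega

theorem isParallelogram_toPolyomino (hI : Indecomposable π) (hπ : Avoids321 π) :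
    IsParallelogram (toPolyomino π).1 (toPolyomino π).2 := by
  have hfst := @getD_toPolyomino_fst _ π
  have hsnd := @getD_toPolyomino_snd _ π
  refine ⟨by simp, ?_, ?_, fun hs => ?_, fun i hi => ?_, fun i hi => ?_⟩
  · refine List.pairwise_ofFn.2 fun i j _ => ?_
    have := val_sub_val_le_of_strictMono (excedanceEmb π).strictMono i j
    have := val_le_val_of_strictMono (excedanceEmb π).strictMono i
    omega
  · refine List.pairwise_ofFn.2 fun i j _ => ?_
    have := val_sub_val_le_of_strictMono hπ.strictMono_apply_excedanceEmb i j
    have := val_le_val_of_strictMono hπ.strictMono_apply_excedanceEmb i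
    omega
  · simp only [length_toPolyomino_fst] at hs
    have := hfst hs
    have := hI.val_excedanceEmb_zero hs
    omega
  · simp only [length_toPolyomino_fst] at hi
    have := lt_apply_excedanceEmb (π := π) ⟨i, hi⟩
    have := hfst hi
    have := hsnd hi
    omega
  · simp only [length_toPolyomino_fst] at hi
    have := hI.excedanceEmb_succ_le hπ hi
    have := hfst hi
    have := hsnd (j := i) (by omega)
    have := val_le_val_of_strictMono (excedanceEmb π).strictMono ⟨i + 1, hi⟩
    omega

theorem image_excedanceEmb : univ.image (excedanceEmb π) = excedances π :=
  (excedances π).image_orderEmbOfFin_univ rfl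

theorem cells_toPolyomino (hπ : Avoids321 π) :
    cells (toPolyomino π).1 (toPolyomino π).2 = inversions π := by
  rw [hπ.inversions_eq_sum, ← sum_filter_of_ne (p := fun x => x < π x) fun x _ h => by omega]
  change _ = ∑ x ∈ excedances π, _
  rw [← image_excedanceEmb, sum_image (excedanceEmb π).injective.injOn, cells,
    length_toPolyomino_fst, sum_range]
  refine sum_congr rfl fun j _ => ?_
  have := getD_toPolyomino_fst j.2
  have := getD_toPolyomino_snd j.2
  simp only [Fin.eta] at *
  omega

theorem size_toPolyomino (hI : Indecomposable π) (hπ : Avoids321 π) :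
    size (toPolyomino π).2 = n := by
  rcases Nat.eq_zero_or_pos #(excedances π) with hs | hs
  · have hn : ¬ 1 < n := fun hn => (hI.card_excedances_pos hn).ne' hs
    rw [List.eq_nil_of_length_eq_zero (length_toPolyomino_snd.trans hs)]
    have := hI.1
    simp only [size, List.length_nil, List.getD_nil]
    omega
  have := hI.apply_excedanceEmb_last hπ hs
  have := getD_toPolyomino_snd (π := π) (j := #(excedances π) - 1) (by omega)
  simp only [size, length_toPolyomino_snd]
  omega

theorem apply_eq_of_toPolyomino_eq {σ : Equiv.Perm (Fin n)} (h : toPolyomino π = toPolyomino σ)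
    {x : Fin n} (hx : x < π x) : σ x = π x := by
  obtain ⟨j, rfl⟩ := exists_excedanceEmb_eq hx
  have hj : (j : ℕ) < #(excedances σ) := by
    simpa [h] using (length_toPolyomino_fst (π := π)).trans_gt j.2
  have h₁ := getD_toPolyomino_fst (π := π) j.2
  have h₂ := getD_toPolyomino_snd (π := π) j.2
  simp only [Fin.eta] at h₁ h₂
  have h₃ := getD_toPolyomino_fst hj
  have h₄ := getD_toPolyomino_snd hj
  rw [h] at h₁ h₂
  have : excedanceEmb σ ⟨j, hj⟩ = excedanceEmb π j := Fin.ext (by omega)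
  have h₅ : σ (excedanceEmb σ ⟨j, hj⟩) = π (excedanceEmb π j) := Fin.ext (by omega)
  rwa [this] at h₅

theorem eq_of_toPolyomino_eq {m : ℕ} {σ : Equiv.Perm (Fin m)} (hIπ : Indecomposable π)
    (hπ : Avoids321 π) (hIσ : Indecomposable σ) (hσ : Avoids321 σ)
    (h : toPolyomino π = toPolyomino σ) : (⟨n, π⟩ : Σ n, Equiv.Perm (Fin n)) = ⟨m, σ⟩ := by
  obtain rfl : n = m := by rw [← size_toPolyomino hIπ hπ, ← size_toPolyomino hIσ hσ, h]
  rw [hπ.eq_of_apply_eq hσ fun x hx => hx.elim (fun hx => (apply_eq_of_toPolyomino_eq h hx).symm)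
    (apply_eq_of_toPolyomino_eq h.symm)]

end Excedances

section Points

variable {a b : List ℕ}

variable (a) in
def IsPoint (x : ℕ) : Prop := ∃ j < a.length, a.getD j 0 + j = x

variable (a) in
def numPointsLE (x : ℕ) : ℕ := #{t ∈ range a.length | a.getD t 0 + t ≤ x}

variable (a) in
def numLE (m : ℕ) : ℕ := #{t ∈ range a.length | a.getD t 0 ≤ m}

variable (a) in
/-- When `a` is weakly increasing, its points `a j + j` increase strictly and `gap a` enumerates
the complement of the set of points in increasing order. -/
def gap (m : ℕ) : ℕ := m + numLE a m

instance (a : List ℕ) : DecidablePred (IsPoint a) := fun x =>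
  inferInstanceAs (Decidable (∃ j < a.length, a.getD j 0 + j = x))

variable (a b) in
/-- Sends the `j`-th point of `a` to the `j`-th point of `b` and the `m`-th gap of `a` to the
`m`-th gap of `b`. -/
def transport (x : ℕ) : ℕ :=
  if IsPoint a x then b.getD (numPointsLE a x - 1) 0 + (numPointsLE a x - 1)
  else gap b (x - numPointsLE a x)

theorem numPointsLE_le_length (x : ℕ) : numPointsLE a x ≤ a.length :=
  (card_filter_le _ _).trans (card_range _).le

theorem numLE_le_length (m : ℕ) : numLE a m ≤ a.length :=
  (card_filter_le _ _).trans (card_range _).le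

theorem lt_numPointsLE_iff (ha : a.Pairwise (· ≤ ·)) {t : ℕ} (x : ℕ) (ht : t < a.length) :
    t < numPointsLE a x ↔ a.getD t 0 + t ≤ x :=
  lt_card_filter_range_iff (fun _ _ hij hj h => by have := ha.getD_le_getD 0 hij hj; omega) ht

theorem lt_numLE_iff (ha : a.Pairwise (· ≤ ·)) {t : ℕ} (m : ℕ) (ht : t < a.length) :
    t < numLE a m ↔ a.getD t 0 ≤ m :=
  lt_card_filter_range_iff (fun _ _ hij hj h => (ha.getD_le_getD 0 hij hj).trans h) ht

theorem numPointsLE_point (ha : a.Pairwise (· ≤ ·)) {j : ℕ} (hj : j < a.length) :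
    numPointsLE a (a.getD j 0 + j) = j + 1 :=
  card_filter_range_eq hj fun t ht => by
    rcases le_or_gt t j with h | h
    · have := ha.getD_le_getD 0 h hj
      omega
    · have := ha.getD_le_getD 0 h.le ht
      omega

theorem numPointsLE_gap (ha : a.Pairwise (· ≤ ·)) (m : ℕ) : numPointsLE a (gap a m) = numLE a m :=
  card_filter_range_eq (numLE_le_length m) fun t ht => by
    have := lt_numLE_iff ha m ht
    unfold gap
    omega

theorem gap_strictMono (a : List ℕ) : StrictMono (gap a) := fun m m' h => by
  have : numLE a m ≤ numLE a m' := card_le_card fun t ht => by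
    simp only [mem_filter] at ht ⊢
    exact ⟨ht.1, ht.2.trans h.le⟩
  unfold gap
  omega

theorem not_isPoint_gap (ha : a.Pairwise (· ≤ ·)) (m : ℕ) : ¬ IsPoint a (gap a m) := by
  rintro ⟨j, hj, h⟩
  have := lt_numLE_iff ha m hj
  unfold gap at h
  omega

theorem exists_gap_eq (ha : a.Pairwise (· ≤ ·)) {x : ℕ} (hx : ¬ IsPoint a x) :
    ∃ m, gap a m = x := by
  obtain ⟨c, hc_eq⟩ : ∃ c, numPointsLE a x = c := ⟨_, rfl⟩
  have hcL : c ≤ a.length := hc_eq ▸ numPointsLE_le_length x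
  have hc : ∀ t < a.length, t < c ↔ a.getD t 0 + t < x := fun t ht => by
    have : a.getD t 0 + t ≠ x := fun h => hx ⟨t, ht, h⟩
    rw [← hc_eq, lt_numPointsLE_iff ha x ht]
    omega
  have hcx : c ≤ x := by
    by_contra! h
    have := (hc x (by omega)).1 h
    omega
  have : numLE a (x - c) = c := card_filter_range_eq hcL fun t ht => by
    constructor
    · intro h
      by_contra! htc
      have := ha.getD_le_getD 0 htc ht
      have := hc c (by omega)
      have : a.getD c 0 + c ≠ x := fun h => hx ⟨c, by omega, h⟩
      omega
    · intro htc
      have := ha.getD_le_getD 0 (Nat.le_sub_one_of_lt htc) (show c - 1 < a.length by omega)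
      have := hc (c - 1) (by omega)
      omega
  exact ⟨x - c, by rw [gap, this]; omega⟩

theorem transport_point (ha : a.Pairwise (· ≤ ·)) {j : ℕ} (hj : j < a.length) :
    transport a b (a.getD j 0 + j) = b.getD j 0 + j := by
  rw [transport, if_pos ⟨j, hj, rfl⟩, numPointsLE_point ha hj, Nat.add_sub_cancel]

theorem transport_gap (ha : a.Pairwise (· ≤ ·)) (m : ℕ) : transport a b (gap a m) = gap b m := by
  rw [transport, if_neg (not_isPoint_gap ha m), numPointsLE_gap ha]
  simp only [gap, Nat.add_sub_cancel]

theorem transport_transport (ha : a.Pairwise (· ≤ ·)) (hb : b.Pairwise (· ≤ ·))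
    (hlen : a.length = b.length) (x : ℕ) : transport b a (transport a b x) = x := by
  by_cases hx : IsPoint a x
  · obtain ⟨j, hj, rfl⟩ := hx
    rw [transport_point ha hj, transport_point hb (hlen ▸ hj)]
  · obtain ⟨m, rfl⟩ := exists_gap_eq ha hx
    rw [transport_gap ha, transport_gap hb]

end Points

namespace IsParallelogram

variable {l r : List ℕ} (P : IsParallelogram l r)
include P

theorem gap_snd_le_gap_fst (m : ℕ) : gap r m ≤ gap l m := by
  have : numLE r m ≤ numLE l m := card_le_card fun t ht => by
    simp only [mem_filter, mem_range] at ht ⊢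
    exact ⟨P.length_eq ▸ ht.1, (P.lt t (P.length_eq ▸ ht.1)).le.trans ht.2⟩
  unfold gap
  omega

theorem point_snd_lt_size {j : ℕ} (hj : j < l.length) : r.getD j 0 + j < size r := by
  have := P.length_eq
  have := P.sorted_snd.getD_le_getD 0 (i := j) (j := r.length - 1) (by omega) (by omega)
  simp only [size]
  omega

theorem transport_lt_size {x : ℕ} (hx : x < size r) : transport l r x < size r := by
  by_cases hpt : IsPoint l x
  · obtain ⟨j, hj, rfl⟩ := hpt
    rw [transport_point P.sorted_fst hj]
    exact P.point_snd_lt_size hj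
  · obtain ⟨m, rfl⟩ := exists_gap_eq P.sorted_fst hpt
    rw [transport_gap P.sorted_fst]
    exact (P.gap_snd_le_gap_fst m).trans_lt hx

theorem lt_transport_iff (x : ℕ) : x < transport l r x ↔ IsPoint l x := by
  by_cases hpt : IsPoint l x
  · obtain ⟨j, hj, rfl⟩ := hpt
    rw [transport_point P.sorted_fst hj]
    have := P.lt j hj
    exact ⟨fun _ => ⟨j, hj, rfl⟩, fun _ => by omega⟩
  · obtain ⟨m, rfl⟩ := exists_gap_eq P.sorted_fst hpt
    rw [transport_gap P.sorted_fst]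
    exact ⟨fun h => absurd h (P.gap_snd_le_gap_fst m).not_gt, fun h => absurd h hpt⟩

theorem transport_lt_of_lt_point {j x : ℕ} (hj : j < l.length) (hx : x < l.getD j 0 + j) :
    transport l r x < r.getD j 0 + j := by
  by_cases hpt : IsPoint l x
  · obtain ⟨t, ht, rfl⟩ := hpt
    rw [transport_point P.sorted_fst ht]
    have htj : t < j := by
      by_contra! h
      have := P.sorted_fst.getD_le_getD 0 h ht
      omega
    have := P.sorted_snd.getD_le_getD 0 htj.le (P.length_eq ▸ hj)
    omega
  · obtain ⟨m, rfl⟩ := exists_gap_eq P.sorted_fst hpt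
    rw [transport_gap P.sorted_fst]
    have := P.gap_snd_le_gap_fst m
    have := P.lt j hj
    omega

noncomputable def toPerm : Equiv.Perm (Fin (size r)) :=
  Equiv.ofBijective (fun x => ⟨transport l r x, P.transport_lt_size x.2⟩) <|
    Finite.injective_iff_bijective.1 fun x y h => Fin.ext <| by
      simpa only [transport_transport P.sorted_fst P.sorted_snd P.length_eq] using
        congrArg (transport r l) (Fin.mk.inj_iff.1 h)

theorem toPerm_apply (x : Fin (size r)) : (P.toPerm x : ℕ) = transport l r x := rfl

theorem avoids321_toPerm : Avoids321 P.toPerm := by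
  rintro ⟨i, j, k, hij, hjk, hkj, hji⟩
  simp only [Fin.lt_def, toPerm_apply] at hij hjk hkj hji
  have hj : ¬ IsPoint l j := by
    rintro ⟨t, ht, htj⟩
    have := P.transport_lt_of_lt_point ht (htj ▸ hij)
    rw [← htj, transport_point P.sorted_fst ht] at hji
    omega
  have hk : ¬ IsPoint l k := by
    rintro ⟨t, ht, htk⟩
    have := P.transport_lt_of_lt_point ht (htk ▸ hjk)
    rw [← htk, transport_point P.sorted_fst ht] at hkj
    omega
  obtain ⟨m, hm⟩ := exists_gap_eq P.sorted_fst hj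
  obtain ⟨m', hm'⟩ := exists_gap_eq P.sorted_fst hk
  rw [← hm, ← hm', transport_gap P.sorted_fst, transport_gap P.sorted_fst] at hkj
  rw [← hm, ← hm', (gap_strictMono l).lt_iff_lt] at hjk
  exact absurd hkj ((gap_strictMono r hjk).not_gt)

/-- A block `[0, J)` would contain the last point `l_t + t` below `J`, whose image `r_t + t`
reaches past the next point (or is the last value). -/
theorem indecomposable_toPerm : Indecomposable P.toPerm := by
  refine ⟨by simp [size], fun ⟨J, hJ, hJn, hblock⟩ => ?_⟩
  have hs : 0 < l.length := by
    by_contra h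
    have hr : r = [] := List.eq_nil_of_length_eq_zero (by have := P.length_eq; omega)
    simp only [hr, size, List.length_nil, List.getD_nil] at hJn
    omega
  have hc := (lt_numPointsLE_iff P.sorted_fst (J - 1) hs).2 (by rw [P.getD_zero hs]; omega)
  set t := numPointsLE l (J - 1) - 1
  have ht : t < l.length := by have := numPointsLE_le_length (a := l) (J - 1); omega
  have hpt := (lt_numPointsLE_iff P.sorted_fst (J - 1) ht).1 (by omega)
  have himg := hblock ⟨l.getD t 0 + t, by omega⟩ (by simp only; omega)
  rw [toPerm_apply, transport_point P.sorted_fst ht] at himg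
  rcases Nat.lt_or_ge (t + 1) l.length with hnext | hlast
  · have := (lt_numPointsLE_iff P.sorted_fst (J - 1) hnext).not.1 (by omega)
    have := P.step t hnext
    omega
  · have := P.length_eq
    simp only [size] at hJn
    rw [show t = r.length - 1 by omega] at himg
    omega

def point (j : Fin l.length) : Fin (size r) :=
  ⟨l.getD j 0 + j, (Nat.add_le_add_right (P.lt j j.2).le j).trans_lt (P.point_snd_lt_size j.2)⟩

theorem strictMono_point : StrictMono P.point := fun i j hij => by
  have := P.sorted_fst.getD_le_getD 0 hij.le j.2
  simp only [point, Fin.lt_def] at hij ⊢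
  omega

theorem image_point : univ.image P.point = excedances P.toPerm := by
  ext x
  simp only [excedances, mem_image, mem_univ, true_and, mem_filter, Fin.lt_def, toPerm_apply,
    P.lt_transport_iff, IsPoint, Fin.ext_iff, point]
  exact ⟨fun ⟨j, hj⟩ => ⟨j, j.2, hj⟩, fun ⟨j, hj, hjx⟩ => ⟨⟨j, hj⟩, hjx⟩⟩

theorem point_mem_excedances (j : Fin l.length) : P.point j ∈ excedances P.toPerm :=
  P.image_point ▸ mem_image_of_mem _ (mem_univ j)

theorem card_excedances_toPerm : #(excedances P.toPerm) = l.length := by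
  rw [← P.image_point, card_image_of_injective _ P.strictMono_point.injective, card_fin]

theorem val_excedanceEmb_toPerm {j : ℕ} (hj : j < #(excedances P.toPerm)) :
    (excedanceEmb P.toPerm ⟨j, hj⟩ : ℕ) = l.getD j 0 + j := by
  have := orderEmbOfFin_unique (s := excedances P.toPerm) rfl
    (f := fun i => P.point (Fin.cast P.card_excedances_toPerm i))
    (fun i => P.point_mem_excedances _)
    (P.strictMono_point.comp (Fin.cast_strictMono _))
  rw [excedanceEmb, ← this]
  rfl

theorem toPolyomino_toPerm : toPolyomino P.toPerm = (l, r) := by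
  have hcard := P.card_excedances_toPerm
  refine Prod.ext (List.ext_getD 0 (by simp [hcard]) fun i hi => ?_)
    (List.ext_getD 0 (by simp [hcard, P.length_eq]) fun i hi => ?_)
  · simp only [length_toPolyomino_fst] at hi
    have := getD_toPolyomino_fst hi
    rw [P.val_excedanceEmb_toPerm hi] at this
    dsimp only
    omega
  · simp only [length_toPolyomino_snd] at hi
    have := getD_toPolyomino_snd hi
    rw [toPerm_apply, P.val_excedanceEmb_toPerm hi, transport_point P.sorted_fst (hcard ▸ hi)]
      at this
    dsimp only
    omega

end IsParallelogram

/-- The number of indecomposable permutations with exactly `k` inversions avoiding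
321 equals the number of parallelogram polyominoes with `k` cells. -/
theorem card_indecomposable_avoids321_eq_polyominoes (k : ℕ) :
    Nat.card {p : Σ n : ℕ, Equiv.Perm (Fin n) //
        Indecomposable p.2 ∧ inversions p.2 = k ∧ Avoids321 p.2}
      = {pr : List ℕ × List ℕ | IsPPolyomino k pr.1 pr.2}.ncard := by
  rw [← Nat.card_coe_set_eq]
  let f (p : {p : Σ n : ℕ, Equiv.Perm (Fin n) //
      Indecomposable p.2 ∧ inversions p.2 = k ∧ Avoids321 p.2}) :
      {pr : List ℕ × List ℕ | IsPPolyomino k pr.1 pr.2} :=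
    ⟨toPolyomino p.1.2, isPPolyomino_iff.2 ⟨isParallelogram_toPolyomino p.2.1 p.2.2.2,
      (cells_toPolyomino p.2.2.2).trans p.2.2.1⟩⟩
  refine Nat.card_congr (Equiv.ofBijective f ⟨fun p q h => Subtype.ext ?_, fun ⟨⟨l, r⟩, h⟩ => ?_⟩)
  · exact eq_of_toPolyomino_eq p.2.1 p.2.2.2 q.2.1 q.2.2.2 (congrArg Subtype.val h)
  · obtain ⟨P, hk⟩ := isPPolyomino_iff.1 h
    refine ⟨⟨⟨_, P.toPerm⟩, P.indecomposable_toPerm, ?_, P.avoids321_toPerm⟩,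
      Subtype.ext P.toPolyomino_toPerm⟩
    rw [← cells_toPolyomino P.avoids321_toPerm, P.toPolyomino_toPerm, hk]
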